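/- arXiv:2302.14737 — 3 statements merged into one kernel-verified Lean document; each statement's English description precedes it below -/
import Mathlib

section
/- Let 1 ≤ ℓ ≤ k be integers, and consider a coloring of a set S of size k such that each color occurs at most k/ℓ times. Then S can be partitioned into ⌊k/ℓ⌋ sets of size exactly ℓ, together with one set of size k - ⌊k/ℓ⌋·ℓ, such that within each set of the partition all elements have pairwise distinct colors. -/
/-!
Peel off rainbow sets one at a time. A set of size `(m + 1) * ℓ` whose colour classes have
size at most `m + 1` has at least `ℓ` colours, and at most `ℓ` of them are *full* (of size
`m + 1`); a rainbow set of size `ℓ` meeting every full colour leaves a set of size `m * ℓ` with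
colour classes of size at most `m`, so induction on `m` produces `m` rainbow parts of size `ℓ`.
With `m = ⌊k / ℓ⌋`, the last part is a rainbow set of size `k - m * ℓ < ℓ`, removed first; it
exists because `k ≤ m * (number of colours)`.
-/

open Finset Function

section

variable {α β : Type*}

structure IsRainbowPartition [DecidableEq α] {ι : Type*} [Fintype ι] (c : α → β) (S : Finset α)
    (P : ι → Finset α) : Prop where
  pairwise_disjoint : Pairwise (Disjoint on P)
  biUnion_eq : univ.biUnion P = S
  injOn : ∀ i, Set.InjOn c (P i)

theorem IsRainbowPartition.snoc [DecidableEq α] {c : α → β} {S T : Finset α} {n : ℕ}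
    {Q : Fin n → Finset α} (hQ : IsRainbowPartition c (S \ T) Q) (hTS : T ⊆ S) (hT : Set.InjOn c T) :
    IsRainbowPartition c S (Fin.snoc Q T) := by
  have hQT (i : Fin n) : Disjoint (Q i) T := by
    have hQi : Q i ⊆ S \ T := hQ.biUnion_eq ▸ subset_biUnion_of_mem Q (mem_univ i)
    exact disjoint_of_subset_left hQi sdiff_disjoint
  refine ⟨?_, ?_, ?_⟩
  · intro i j hij
    induction i using Fin.lastCases <;> induction j using Fin.lastCases <;>
      simp only [onFun, Fin.snoc_castSucc, Fin.snoc_last] at hij ⊢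
    · exact absurd rfl hij
    · exact (hQT _).symm
    · exact hQT _
    · exact hQ.pairwise_disjoint fun h => hij (congrArg _ h)
  · ext a
    have := congrArg (a ∈ ·) hQ.biUnion_eq
    simp only [mem_biUnion, mem_univ, true_and, mem_sdiff] at this
    simp only [mem_biUnion, mem_univ, true_and, Fin.exists_fin_succ', Fin.snoc_castSucc,
      Fin.snoc_last, this]
    have := @hTS a
    tauto
  · intro i
    induction i using Fin.lastCases <;> simp only [Fin.snoc_castSucc, Fin.snoc_last]
    exacts [hT, hQ.injOn _]

theorem le_card_image_of_card_fiber_le [DecidableEq β] {c : α → β} {S : Finset α} {m n : ℕ}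
    (hm : 0 < m) (hfib : ∀ b, #{a ∈ S | c a = b} ≤ m) (hS : m * n ≤ #S) : n ≤ #(S.image c) :=
  le_of_mul_le_mul_left (hS.trans (card_le_mul_card_image S m fun b _ => hfib b)) hm

theorem card_full_fibers_le [DecidableEq β] {c : α → β} {S : Finset α} {m ℓ : ℕ}
    (hS : #S = (m + 1) * ℓ) :
    #{b ∈ S.image c | #{a ∈ S | c a = b} = m + 1} ≤ ℓ := by
  refine le_of_mul_le_mul_left ?_ m.succ_pos
  calc (m + 1) * #{b ∈ S.image c | #{a ∈ S | c a = b} = m + 1}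
      = ∑ b ∈ S.image c with #{a ∈ S | c a = b} = m + 1, #{a ∈ S | c a = b} := by
        rw [sum_congr rfl fun b hb => (mem_filter.mp hb).2, sum_const, smul_eq_mul, mul_comm]
    _ ≤ ∑ b ∈ S.image c, #{a ∈ S | c a = b} := sum_le_sum_of_subset (filter_subset _ _)
    _ = (m + 1) * ℓ := by rw [← card_eq_sum_card_image, hS]

theorem exists_injOn_subset_card_eq [DecidableEq α] [DecidableEq β] (c : α → β) {S : Finset α}
    {H : Finset β} {n : ℕ} (hHS : H ⊆ S.image c) (hHn : #H ≤ n) (hn : n ≤ #(S.image c)) :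
    ∃ T ⊆ S, #T = n ∧ Set.InjOn c T ∧ H ⊆ T.image c := by
  obtain ⟨u, huS, hu, hu_image⟩ :=
    exists_subset_injOn_image_eq_of_surjOn (f := c) S (S.image c) (by simp [Set.SurjOn])
  have hU_image : {a ∈ u | c a ∈ H}.image c = H := by
    rw [← filter_image (p := (· ∈ H)), hu_image, filter_mem_eq_inter, inter_eq_right.mpr hHS]
  have hU_card : #{a ∈ u | c a ∈ H} = #H :=
    (card_image_of_injOn (hu.mono (filter_subset _ u))).symm.trans (congrArg card hU_image)
  have hu_card : #u = #(S.image c) := hu_image ▸ (card_image_of_injOn hu).symm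
  obtain ⟨T, hUT, hTu, hT⟩ := exists_subsuperset_card_eq (filter_subset _ u)
    (hU_card ▸ hHn) (hu_card ▸ hn)
  exact ⟨T, hTu.trans (coe_subset.mp huS), hT, hu.mono hTu, hU_image ▸ image_subset_image hUT⟩

theorem card_fiber_sdiff_le [DecidableEq α] [DecidableEq β] {c : α → β} {S T : Finset α} {b : β}
    {m : ℕ} (hTS : T ⊆ S) (hb : b ∈ T.image c) (hfib : #{a ∈ S | c a = b} ≤ m + 1) :
    #{a ∈ S \ T | c a = b} ≤ m := by
  obtain ⟨a, haT, rfl⟩ := mem_image.mp hb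
  have hsub : {x ∈ S \ T | c x = c a} ⊂ {x ∈ S | c x = c a} := by
    rw [ssubset_iff_of_subset (filter_subset_filter _ sdiff_subset)]
    exact ⟨a, mem_filter.mpr ⟨hTS haT, rfl⟩, fun h => (mem_sdiff.mp (mem_filter.mp h).1).2 haT⟩
  have := card_lt_card hsub
  omega

theorem exists_rainbow_partition_of_card_eq_mul [DecidableEq α] [DecidableEq β] (c : α → β)
    (ℓ : ℕ) {m : ℕ} {S : Finset α} (hS : #S = m * ℓ) (hfib : ∀ b, #{a ∈ S | c a = b} ≤ m) :
    ∃ P : Fin m → Finset α, IsRainbowPartition c S P ∧ ∀ i, #(P i) = ℓ := by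
  induction m generalizing S with
  | zero =>
    refine ⟨Fin.elim0, ⟨fun i => i.elim0, ?_, fun i => i.elim0⟩, fun i => i.elim0⟩
    simp_all
  | succ m ih =>
    obtain ⟨T, hTS, hT_card, hT, hT_full⟩ := exists_injOn_subset_card_eq c (filter_subset _ _)
      (card_full_fibers_le hS) (le_card_image_of_card_fiber_le m.succ_pos hfib hS.ge)
    have hfib' (b : β) : #{a ∈ S \ T | c a = b} ≤ m := by
      by_cases hb : #{a ∈ S | c a = b} = m + 1
      · have hbS : b ∈ S.image c := fiber_nonempty_iff_mem_image.mp (card_pos.mp (by omega))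
        exact card_fiber_sdiff_le hTS (hT_full (mem_filter.mpr ⟨hbS, hb⟩)) (hfib b)
      · have := hfib b
        exact (card_le_card (filter_subset_filter _ sdiff_subset)).trans (by omega)
    have hST_card : #(S \ T) = m * ℓ := by
      rw [card_sdiff_of_subset hTS, hS, hT_card, Nat.succ_mul, Nat.add_sub_cancel]
    obtain ⟨Q, hQ, hQ_card⟩ := ih hST_card hfib'
    exact ⟨_, hQ.snoc hTS hT, Fin.lastCases (by simpa using hT_card) (by simpa using hQ_card)⟩

theorem exists_rainbow_partition_fin_succ [DecidableEq α] [DecidableEq β] (c : α → β)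
    {ℓ m : ℕ} {S : Finset α} (hfib : ∀ b, #{a ∈ S | c a = b} ≤ m) (hmS : m * ℓ ≤ #S)
    (hSm : #S - m * ℓ ≤ ℓ) :
    ∃ P : Fin (m + 1) → Finset α, IsRainbowPartition c S P ∧
      (∀ i : Fin m, #(P i.castSucc) = ℓ) ∧ #(P (Fin.last m)) = #S - m * ℓ := by
  have hr : #S - m * ℓ ≤ #(S.image c) := by
    rcases m.eq_zero_or_pos with rfl | hm
    · have := card_le_mul_card_image S 0 fun b _ => hfib b
      omega
    · exact le_card_image_of_card_fiber_le hm hfib ((Nat.mul_le_mul_left m hSm).trans hmS)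
  obtain ⟨R, hRS, hR_card, hR, -⟩ :=
    exists_injOn_subset_card_eq c (empty_subset _) (by simp) hr
  obtain ⟨Q, hQ, hQ_card⟩ := exists_rainbow_partition_of_card_eq_mul c ℓ (S := S \ R)
    (by rw [card_sdiff_of_subset hRS, hR_card]; omega)
    fun b => (card_le_card (filter_subset_filter _ sdiff_subset)).trans (hfib b)
  exact ⟨_, hQ.snoc hRS hR, by simpa using hQ_card, by simpa using hR_card⟩

end

theorem stmt_0_general {α β : Type*} [DecidableEq α] [DecidableEq β] (k ℓ : ℕ)
    (hℓ : 1 ≤ ℓ)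
    (S : Finset α) (hS : S.card = k) (c : α → β)
    (hcol : ∀ b : β, ((S.filter fun a => c a = b).card : ℚ) ≤ (k : ℚ) / (ℓ : ℚ)) :
    ∃ P : Fin (k / ℓ + 1) → Finset α,
      (∀ i j, i ≠ j → Disjoint (P i) (P j)) ∧
      Finset.univ.biUnion P = S ∧
      (∀ i : Fin (k / ℓ + 1), (i : ℕ) < k / ℓ → (P i).card = ℓ) ∧
      (P (Fin.last (k / ℓ))).card = k - (k / ℓ) * ℓ ∧
      (∀ i, Set.InjOn c (P i)) := by
  subst hS
  have hfib (b : β) : #{a ∈ S | c a = b} ≤ #S / ℓ :=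
    Nat.floor_div_eq_div (K := ℚ) #S ℓ ▸ Nat.le_floor (hcol b)
  have hrem : #S - #S / ℓ * ℓ ≤ ℓ := by
    have := Nat.div_add_mod' #S ℓ
    have := Nat.mod_lt #S hℓ
    omega
  obtain ⟨P, hP, hP_card, hP_last⟩ :=
    exists_rainbow_partition_fin_succ c hfib (Nat.div_mul_le_self _ ℓ) hrem
  exact ⟨P, hP.pairwise_disjoint, hP.biUnion_eq, fun i hi => hP_card ⟨i, hi⟩, hP_last, hP.injOn⟩

theorem stmt_0 {α β : Type*} [DecidableEq α] [DecidableEq β] (k ℓ : ℕ)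
    (hℓ : 1 ≤ ℓ) (hk : ℓ ≤ k)
    (S : Finset α) (hS : S.card = k) (c : α → β)
    (hcol : ∀ b : β, ((S.filter fun a => c a = b).card : ℚ) ≤ (k : ℚ) / (ℓ : ℚ)) :
    ∃ P : Fin (k / ℓ + 1) → Finset α,
      (∀ i j, i ≠ j → Disjoint (P i) (P j)) ∧
      Finset.univ.biUnion P = S ∧
      (∀ i : Fin (k / ℓ + 1), (i : ℕ) < k / ℓ → (P i).card = ℓ) ∧
      (P (Fin.last (k / ℓ))).card = k - (k / ℓ) * ℓ ∧
      (∀ i, Set.InjOn c (P i)) :=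
  stmt_0_general k ℓ hℓ S hS c hcol
end

section
/- Let m = ⌊k/ℓ⌋ and r = k - mℓ where 1 ≤ ℓ ≤ k. Then {1,...,k} can be partitioned into sets I_1, ..., I_m each of size ℓ, and a set I_{m+1} of size r, such that for every j and any two distinct elements x, y ∈ I_j we have |x - y| ≥ m. -/
open Finset

/-!
Since `k = ℓ m + r` with `r < ℓ`, the numbers `1, …, k` can be laid out in `ℓ` consecutive rows,
the first `r` of length `m + 1` and the others of length `m`. The `i`-th column (the `i`-th entries
of the rows) has `ℓ` elements for `i < m` and `r` elements for `i = m`, and two entries of a column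
are at least one full row, hence at least `m`, apart.
-/

/-- Zero-based offset of the first entry of row `t`, when the first `r` rows have length `m + 1`
and all later rows have length `m`. -/
def rowStart (m r t : ℕ) : ℕ := t * m + min t r

/-- Column `i` of the rows `0, …, n - 1`, shifted to start at `1`. -/
def column (m r n i : ℕ) : Finset ℕ := (range n).image fun t => rowStart m r t + i + 1

section

variable {m r : ℕ}

theorem rowStart_succ (t : ℕ) :
    rowStart m r (t + 1) = rowStart m r t + m + if t < r then 1 else 0 := by
  simp only [rowStart, add_mul, one_mul]
  split_ifs <;> omega

theorem rowStart_add_le_of_lt {a b : ℕ} (h : a < b) : rowStart m r a + m ≤ rowStart m r b := by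
  have : (a + 1) * m ≤ b * m := Nat.mul_le_mul_right m h
  simp only [rowStart, add_mul, one_mul] at *
  omega

theorem rowStart_mono : Monotone (rowStart m r) := fun a b h => by
  rcases h.lt_or_eq with h | rfl
  · exact (Nat.le_add_right _ _).trans (rowStart_add_le_of_lt h)
  · rfl

theorem rowStart_self_of_le {ℓ : ℕ} (h : r ≤ ℓ) : rowStart m r ℓ = ℓ * m + r := by
  simp [rowStart, h]

theorem eq_and_eq_of_rowStart_add_eq {t t' i i' : ℕ}
    (hi : rowStart m r t + i < rowStart m r (t + 1))
    (hi' : rowStart m r t' + i' < rowStart m r (t' + 1))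
    (h : rowStart m r t + i = rowStart m r t' + i') : t = t' ∧ i = i' := by
  have ht : t = t' := by
    by_contra hne
    rcases Nat.lt_or_gt_of_ne hne with hlt | hlt
    · have : rowStart m r (t + 1) ≤ rowStart m r t' := rowStart_mono hlt
      omega
    · have : rowStart m r (t' + 1) ≤ rowStart m r t := rowStart_mono hlt
      omega
  subst ht
  exact ⟨rfl, by omega⟩

variable {n n' i i' : ℕ}

theorem card_column (h : ∀ t < n, rowStart m r t + i < rowStart m r (t + 1)) :
    (column m r n i).card = n := by
  rw [column, card_image_of_injOn, card_range]
  intro t ht t' ht' heq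
  simp only [coe_range, Set.mem_Iio] at ht ht'
  exact (eq_and_eq_of_rowStart_add_eq (h t ht) (h t' ht') (by simpa using heq)).1

theorem disjoint_column (h : ∀ t < n, rowStart m r t + i < rowStart m r (t + 1))
    (h' : ∀ t < n', rowStart m r t + i' < rowStart m r (t + 1)) (hii' : i ≠ i') :
    Disjoint (column m r n i) (column m r n' i') := by
  simp only [disjoint_left, column, mem_image, mem_range, not_exists, not_and]
  rintro _ ⟨t, ht, rfl⟩ t' ht' heq
  exact hii' (eq_and_eq_of_rowStart_add_eq (h t ht) (h' t' ht') (by omega)).2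

theorem column_subset_Icc {ℓ : ℕ} (h : ∀ t < n, rowStart m r t + i < rowStart m r (t + 1))
    (hn : n ≤ ℓ) (hr : r ≤ ℓ) : column m r n i ⊆ Icc 1 (ℓ * m + r) := by
  simp only [subset_iff, column, mem_image, mem_range, mem_Icc]
  rintro _ ⟨t, ht, rfl⟩
  have : rowStart m r (t + 1) ≤ rowStart m r ℓ := rowStart_mono (by omega)
  have := h t ht
  rw [rowStart_self_of_le hr] at *
  omega

theorem le_abs_sub_of_mem_column {x y : ℕ} (hx : x ∈ column m r n i) (hy : y ∈ column m r n i)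
    (hxy : x ≠ y) : (m : ℤ) ≤ |(x : ℤ) - (y : ℤ)| := by
  simp only [column, mem_image] at hx hy
  obtain ⟨t, -, rfl⟩ := hx
  obtain ⟨t', -, rfl⟩ := hy
  rcases lt_trichotomy t t' with h | rfl | h
  · have := rowStart_add_le_of_lt (m := m) (r := r) h
    rw [abs_sub_comm, abs_of_nonneg (by omega)]
    omega
  · exact absurd rfl hxy
  · have := rowStart_add_le_of_lt (m := m) (r := r) h
    rw [abs_of_nonneg (by omega)]
    omega

end

theorem stmt_1_general (k ℓ m r : ℕ) (hℓ : 1 ≤ ℓ)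
    (hm : m = k / ℓ) (hr : r = k - m * ℓ) :
    ∃ I : Fin (m + 1) → Finset ℕ,
      (∀ i j, i ≠ j → Disjoint (I i) (I j)) ∧
      Finset.univ.biUnion I = Finset.Icc 1 k ∧
      (∀ i : Fin (m + 1), (i : ℕ) < m → (I i).card = ℓ) ∧
      (I (Fin.last m)).card = r ∧
      (∀ i, ∀ x ∈ I i, ∀ y ∈ I i, x ≠ y → (m : ℤ) ≤ |(x : ℤ) - (y : ℤ)|) := by
  have hk : k = ℓ * m + r := by
    rw [hr, hm, mul_comm, Nat.add_sub_cancel' (Nat.div_mul_le_self k ℓ)]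
  have hrℓ : r < ℓ := by
    rw [hr, hm, ← Nat.mod_eq_sub_div_mul]
    exact Nat.mod_lt k hℓ
  set n : Fin (m + 1) → ℕ := fun i => if (i : ℕ) < m then ℓ else r with hn
  have hrow (i : Fin (m + 1)) : ∀ t < n i, rowStart m r t + i < rowStart m r (t + 1) := by
    intro t ht
    rw [rowStart_succ]
    have := i.is_le
    simp only [hn] at ht
    split_ifs at ht ⊢ <;> omega
  have hdisj (i j : Fin (m + 1)) (hij : i ≠ j) :
      Disjoint (column m r (n i) i) (column m r (n j) j) :=
    disjoint_column (hrow i) (hrow j) (Fin.val_injective.ne hij)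
  have hunion : univ.biUnion (fun i => column m r (n i) i) = Icc 1 k := by
    refine eq_of_subset_of_card_le (biUnion_subset.2 fun i _ => ?_) ?_
    · rw [hk]
      exact column_subset_Icc (hrow i) (by simp only [hn]; split_ifs <;> omega) hrℓ.le
    · rw [card_biUnion fun i _ j _ => hdisj i j, sum_congr rfl fun i _ => card_column (hrow i)]
      simp [hn, Fin.sum_univ_castSucc, hk, mul_comm]
  exact ⟨_, hdisj, hunion, fun i hi => (card_column (hrow i)).trans (if_pos hi),
    (card_column (hrow _)).trans (if_neg (by simp)),
    fun i x hx y hy => le_abs_sub_of_mem_column hx hy⟩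

theorem stmt_1 (k ℓ m r : ℕ) (hℓ : 1 ≤ ℓ) (hk : ℓ ≤ k)
    (hm : m = k / ℓ) (hr : r = k - m * ℓ) :
    ∃ I : Fin (m + 1) → Finset ℕ,
      (∀ i j, i ≠ j → Disjoint (I i) (I j)) ∧
      Finset.univ.biUnion I = Finset.Icc 1 k ∧
      (∀ i : Fin (m + 1), (i : ℕ) < m → (I i).card = ℓ) ∧
      (I (Fin.last m)).card = r ∧
      (∀ i, ∀ x ∈ I i, ∀ y ∈ I i, x ≠ y → (m : ℤ) ≤ |(x : ℤ) - (y : ℤ)|) :=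
  stmt_1_general k ℓ m r hℓ hm hr
end

section
/- Let p be a prime, n ≥ 1, and let ℓ ≤ p. Suppose y_1, ..., y_p ∈ A ⊆ F_p^n satisfy y_1 + ... + y_p = 0, and suppose {1,...,p} is partitioned into sets S_1, ..., S_t of size ℓ and one set S_{t+1} of size r = p − tℓ, such that for each j the vectors y_i with i ∈ S_j are pairwise distinct. Further suppose that for each j ∈ {1,...,t}, the family of ℓ-element subsets of A of distinct elements summing to Σ_{i ∈ S_j} y_i has no cover of size at most p. Then A contains p pairwise distinct vectors x_1, ..., x_p with x_1 + ... + x_p = 0. -/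
/-!
Keep the last block of `y` and realise the other block sums one at a time by `ℓ`-subsets of
`A`, each disjoint from everything chosen so far. At every stage at most `p` vectors are in
use, and they do not cover the family of admissible `ℓ`-subsets, so the next block always
fits. The union has `p` elements and sum `∑ y = 0`.
-/

open Finset

theorem exists_subset_card_sum_of_no_small_cover {G ι : Type*} [AddCommMonoid G]
    [DecidableEq G] {A L : Finset G} (hLA : L ⊆ A) {m ℓ : ℕ} (s : ι → G) (I : Finset ι)
    (hcard : #L + #I * ℓ ≤ m)
    (hnocover : ∀ j ∈ I, ¬ ∃ Z ⊆ A, #Z ≤ m ∧ ∀ T ⊆ A, #T = ℓ →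
      ∑ x ∈ T, x = s j → (T ∩ Z).Nonempty) :
    ∃ B ⊆ A, #B = #L + #I * ℓ ∧ ∑ x ∈ B, x = ∑ x ∈ L, x + ∑ j ∈ I, s j := by
  classical
  induction I using Finset.induction_on with
  | empty => exact ⟨L, hLA, by simp, by simp⟩
  | @insert a I ha ih =>
    rw [card_insert_of_notMem ha] at hcard
    obtain ⟨B, hBA, hBcard, hBsum⟩ :=
      ih (by nlinarith) fun j hj => hnocover j (mem_insert_of_mem hj)
    have hroom : ∃ T ⊆ A, #T = ℓ ∧ ∑ x ∈ T, x = s a ∧ Disjoint T B := by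
      have h := hnocover a (mem_insert_self a I)
      push Not at h
      obtain ⟨T, hTA, hTcard, hTsum, hTB⟩ := h B hBA (by rw [hBcard]; nlinarith)
      exact ⟨T, hTA, hTcard, hTsum, disjoint_iff_inter_eq_empty.mpr hTB⟩
    obtain ⟨T, hTA, hTcard, hTsum, hTB⟩ := hroom
    refine ⟨T ∪ B, union_subset hTA hBA, ?_, ?_⟩
    · rw [card_union_of_disjoint hTB, card_insert_of_notMem ha, hTcard, hBcard]
      ring
    · rw [sum_union hTB, sum_insert ha, hTsum, hBsum]
      abel

theorem Finset.exists_injective_fin_sum_eq {G : Type*} [AddCommMonoid G] {B : Finset G} {p : ℕ}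
    (hB : #B = p) :
    ∃ x : Fin p → G,
      Function.Injective x ∧ (∀ i, x i ∈ B) ∧ ∑ i, x i = ∑ b ∈ B, b := by
  subst hB
  refine ⟨fun i => B.equivFin.symm i, Subtype.val_injective.comp B.equivFin.symm.injective,
    fun i => (B.equivFin.symm i).2, ?_⟩
  rw [Equiv.sum_comp B.equivFin.symm (fun b : B => (b : G))]
  exact sum_coe_sort B id

theorem stmt_11_general (p n ℓ t r : ℕ)
    (htℓ : t * ℓ ≤ p) (hr : r = p - t * ℓ)
    (A : Finset (Fin n → ZMod p))
    (y : Fin p → (Fin n → ZMod p)) (hyA : ∀ i, y i ∈ A) (hsum : ∑ i, y i = 0)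
    (S : Fin (t + 1) → Finset (Fin p))
    (hdisj : ∀ i j, i ≠ j → Disjoint (S i) (S j))
    (hcover : Finset.univ.biUnion S = Finset.univ)
    (hlast : (S (Fin.last t)).card = r)
    (hinj : ∀ j, Set.InjOn y (S j))
    (hnocover : ∀ j : Fin (t + 1), (j : ℕ) < t →
      ¬ ∃ Z ⊆ A, Z.card ≤ p ∧ ∀ T ⊆ A, T.card = ℓ →
        ∑ x ∈ T, x = ∑ i ∈ S j, y i → (T ∩ Z).Nonempty) :
    ∃ x : Fin p → (Fin n → ZMod p),
      Function.Injective x ∧ (∀ i, x i ∈ A) ∧ ∑ i, x i = 0 := by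
  set L := (S (Fin.last t)).image y
  have hLA : L ⊆ A := image_subset_iff.mpr fun i _ => hyA i
  have hLcard : #L = r := by rw [card_image_of_injOn (hinj _), hlast]
  have hLsum : ∑ x ∈ L, x = ∑ i ∈ S (Fin.last t), y i := sum_image (hinj _)
  have hIcard : #(univ.erase (Fin.last t)) = t := by simp
  obtain ⟨B, hBA, hBcard, hBsum⟩ := exists_subset_card_sum_of_no_small_cover hLA
    (fun j => ∑ i ∈ S j, y i) (univ.erase (Fin.last t)) (by rw [hIcard]; omega)
    fun j hj => hnocover j (Fin.val_lt_last (ne_of_mem_erase hj))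
  have hBsum' : ∑ x ∈ B, x = 0 := by
    rw [hBsum, hLsum, add_sum_erase univ (fun j => ∑ i ∈ S j, y i) (mem_univ _),
      ← sum_biUnion fun i _ j _ => hdisj i j, hcover, hsum]
  have hBcard' : #B = p := by rw [hBcard, hIcard]; omega
  obtain ⟨x, hxinj, hxB, hxsum⟩ := exists_injective_fin_sum_eq hBcard'
  exact ⟨x, hxinj, fun i => hBA (hxB i), hxsum.trans hBsum'⟩

theorem stmt_11 (p n ℓ t r : ℕ) [NeZero p] (hp : p.Prime) (hn : 1 ≤ n)
    (hℓp : ℓ ≤ p) (htℓ : t * ℓ ≤ p) (hr : r = p - t * ℓ)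
    (A : Finset (Fin n → ZMod p))
    (y : Fin p → (Fin n → ZMod p)) (hyA : ∀ i, y i ∈ A) (hsum : ∑ i, y i = 0)
    (S : Fin (t + 1) → Finset (Fin p))
    (hdisj : ∀ i j, i ≠ j → Disjoint (S i) (S j))
    (hcover : Finset.univ.biUnion S = Finset.univ)
    (hcard : ∀ j : Fin (t + 1), (j : ℕ) < t → (S j).card = ℓ)
    (hlast : (S (Fin.last t)).card = r)
    (hinj : ∀ j, Set.InjOn y (S j))
    (hnocover : ∀ j : Fin (t + 1), (j : ℕ) < t →
      ¬ ∃ Z ⊆ A, Z.card ≤ p ∧ ∀ T ⊆ A, T.card = ℓ →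
        ∑ x ∈ T, x = ∑ i ∈ S j, y i → (T ∩ Z).Nonempty) :
    ∃ x : Fin p → (Fin n → ZMod p),
      Function.Injective x ∧ (∀ i, x i ∈ A) ∧ ∑ i, x i = 0 :=
  stmt_11_general p n ℓ t r htℓ hr A y hyA hsum S hdisj hcover hlast hinj hnocover
end
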